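/- Let F be a planar necklace (a necklace in ℝ^2) with no cut points, and let U be a bounded connected component of ℝ^2 \ F. Then for every finite word σ over I, f_σ(U) is a bounded connected component of ℝ^2 \ F; in particular f_σ(U) ∩ F = ∅. -/

import Mathlib

open Set Topology Metric Bornology

noncomputable section

/-- Euclidean space `ℝ^d`. -/
abbrev Euc (d : ℕ) := EuclideanSpace ℝ (Fin d)

/-- A fractal necklace in `ℝ^d`: the attractor `F` of a necklace IFS `f_1, …, f_n`
(`n ≥ 3`) of contractive homeomorphisms of `ℝ^d`, where cyclically adjacent 1-level
copies meet in a single point (a main node `z k`) and non-adjacent copies are disjoint. -/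
structure Necklace (d : ℕ) where
  n : ℕ
  hn : 3 ≤ n
  f : Fin n → (Euc d ≃ₜ Euc d)
  contr : ∀ k, ∃ c : NNReal, c < 1 ∧ LipschitzWith c (f k)
  F : Set (Euc d)
  Fne : F.Nonempty
  Fcpt : IsCompact F
  Fattr : F = ⋃ k, (f k) '' F
  z : Fin n → Euc d
  hz : ∀ k : Fin n, (f k) '' F ∩ (f (k + ⟨1, by omega⟩)) '' F = {z k}
  hdisj : ∀ m k : Fin n, m ≠ k → m ≠ k + ⟨1, by omega⟩ → k ≠ m + ⟨1, by omega⟩ →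
    (f m) '' F ∩ (f k) '' F = ∅

namespace Necklace

variable {d : ℕ}

/-- The digit `1` of `Fin n`. -/
def one (N : Necklace d) : Fin N.n := ⟨1, by have := N.hn; omega⟩

/-- The homeomorphism `f_σ = f_{i₁} ∘ ⋯ ∘ f_{i_m}` associated to a word `σ = i₁⋯i_m`. -/
def word (N : Necklace d) : List (Fin N.n) → (Euc d ≃ₜ Euc d)
  | [] => Homeomorph.refl _
  | i :: s => (N.word s).trans (N.f i)

/-- The copy `F_σ = f_σ(F)` of the necklace. -/
def copy (N : Necklace d) (σ : List (Fin N.n)) : Set (Euc d) := N.word σ '' N.F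

/-- `c_m(x)`: the number of words `σ` of length `m` with `x ∈ F_σ`. -/
def cnt (N : Necklace d) (m : ℕ) (x : Euc d) : ℕ :=
  Set.ncard {σ : List (Fin N.n) | σ.length = m ∧ x ∈ N.copy σ}

/-- The boundary `∂_F F_k = {z_{k-1}, z_k}` of the 1-level copy `F_k` in `F`. -/
def bdry (N : Necklace d) (k : Fin N.n) : Set (Euc d) := {N.z (k - N.one), N.z k}

/-- A necklace is stable if for each `k` at least two second-level copies `F_{kj}`
meet `∂_F F_k`. -/
def Stable (N : Necklace d) : Prop :=
  ∀ k : Fin N.n,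
    2 ≤ Set.ncard {A : Set (Euc d) |
      (∃ j : Fin N.n, A = N.f k '' (N.f j '' N.F)) ∧ (A ∩ N.bdry k).Nonempty}

/-- A necklace is good if `∂_F F_k` is not contained in any second-level copy `F_{kj}`. -/
def Good (N : Necklace d) : Prop :=
  ∀ k j : Fin N.n, ¬ (N.bdry k ⊆ N.f k '' (N.f j '' N.F))

/-- A necklace is of bounded ramification if `{c_m(z_k)}_m` is bounded for each `k`. -/
def BoundedRamification (N : Necklace d) : Prop :=
  ∀ k : Fin N.n, ∃ C : ℕ, ∀ m : ℕ, N.cnt m (N.z k) ≤ C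

/-- `M_F`: the set of points that are main nodes of some copy of `F`. -/
def MF (N : Necklace d) : Set (Euc d) :=
  {x | ∃ (σ : List (Fin N.n)) (k : Fin N.n), x = N.word σ (N.z k)}

/-- A necklace has no cut points if `F \ {x}` is connected for every `x ∈ F`. -/
def NoCutPoints (N : Necklace d) : Prop :=
  ∀ x ∈ N.F, IsConnected (N.F \ {x})

/-- Property I: each 1-level copy `F_k` has an arc from `z_{k-1}` to `z_k` passing
through at least two main nodes of `F_k`. -/
def PropertyI (N : Necklace d) : Prop :=
  ∀ k : Fin N.n, ∃ γ : Path (N.z (k - N.one)) (N.z k),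
    Function.Injective γ ∧ (∀ t, γ t ∈ N.f k '' N.F) ∧
    ∃ p q : Euc d, p ≠ q ∧ (∃ j, p = N.f k (N.z j)) ∧ (∃ j, q = N.f k (N.z j)) ∧
      p ∈ Set.range γ ∧ q ∈ Set.range γ

/-- A necklace is self-similar if the maps of its NIFS are (contractive) similitudes. -/
def SelfSimilar (N : Necklace d) : Prop :=
  ∀ k : Fin N.n, ∃ c : ℝ, 0 < c ∧ c < 1 ∧ ∀ x y, dist (N.f k x) (N.f k y) = c * dist x y

/-- The open set condition for the NIFS of a necklace. -/
def OSC (N : Necklace d) : Prop :=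
  ∃ V : Set (Euc d), V.Nonempty ∧ IsOpen V ∧ IsBounded V ∧
    (∀ k, N.f k '' V ⊆ V) ∧ ∀ j k : Fin N.n, j ≠ k → N.f j '' V ∩ N.f k '' V = ∅

end Necklace

/-!
Let `V = f_k(U)`; it is a bounded component of `ℝ^d \ F_k`, where `F_k = f_k(F)`. Without cut
points, the nodes `z_i` are pairwise distinct and each copy minus one point stays connected, so
`(⋃_{j ≠ k} F_j) \ {z_{k-1}, z_k}` is connected: a chain of copies glued at the nodes
`z_{k+1}, …, z_{k-2}`. If `V` met `F`, this set would meet `V`; it can only leave the open set `V`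
through `F_k`, which it avoids, so it lies in `V` and `F ⊆ F_k ∪ V`. But a bounded component of
the complement of `F_k` is no farther from any point than `F_k` is (a ray leaving it would escape
to infinity), so `diam F ≤ diam F_k < diam F`. Hence `f_k(U)` misses `F` and is a component of
`ℝ^d \ F`; induct on `σ`.
-/

section Connectedness

variable {X : Type*} [TopologicalSpace X] {s t : Set X}

theorem IsPreconnected.of_sdiff_singleton {a b c : X} (hab : a ≠ b) (hc : c ∈ s \ {a, b})
    (ha : IsPreconnected (s \ {a})) (hb : IsPreconnected (s \ {b})) : IsPreconnected s := by
  have hs : s = s \ {a} ∪ s \ {b} := by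
    ext y
    by_cases hy : y = a <;> simp_all
  rw [hs]
  exact ha.union c ⟨hc.1, fun h => hc.2 (Or.inl h)⟩ ⟨hc.1, fun h => hc.2 (Or.inr h)⟩ hb

theorem IsPreconnected.sdiff_of_subsingleton_inter (hs : IsPreconnected s)
    (hcut : ∀ x ∈ s, IsPreconnected (s \ {x})) (ht : (s ∩ t).Subsingleton) :
    IsPreconnected (s \ t) := by
  rw [← sdiff_self_inter]
  rcases ht.eq_empty_or_singleton with h | ⟨x, h⟩
  · rwa [h, sdiff_empty]
  · rw [h]
    exact hcut x (h.superset (mem_singleton x)).1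

theorem closure_connectedComponentIn_subset [LocallyConnectedSpace X] (hs : IsOpen s) (x : X) :
    closure (connectedComponentIn s x) ⊆ connectedComponentIn s x ∪ sᶜ := by
  intro y hy
  by_cases hys : y ∈ s
  · obtain ⟨p, hpy, hpx⟩ := mem_closure_iff.mp hy _ hs.connectedComponentIn
      (mem_connectedComponentIn hys)
    rw [connectedComponentIn_eq hpx, ← connectedComponentIn_eq hpy]
    exact Or.inl (mem_connectedComponentIn hys)
  · exact Or.inr hys

theorem connectedComponentIn_eq_of_subset {x : X} (hts : t ⊆ s) (hx : x ∈ t)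
    (h : connectedComponentIn s x ⊆ t) : connectedComponentIn t x = connectedComponentIn s x :=
  (connectedComponentIn_mono x hts).antisymm
    (isPreconnected_connectedComponentIn.subset_connectedComponentIn
      (mem_connectedComponentIn (hts hx)) h)

end Connectedness

section BoundedComponent

variable {E : Type*} [NormedAddCommGroup E] [NormedSpace ℝ E] {K : Set E} {x : E}

theorem exists_dist_le_of_mem_connectedComponentIn_compl (hK : K.Nonempty)
    (hb : IsBounded (connectedComponentIn Kᶜ x)) {v : E} (hv : v ∈ connectedComponentIn Kᶜ x)
    (p : E) : ∃ q ∈ K, dist v p ≤ dist q p := by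
  by_contra! hfar
  obtain ⟨q₀, hq₀⟩ := hK
  have hvp : 0 < dist v p := dist_nonneg.trans_lt (hfar q₀ hq₀)
  set ray : ℝ → E := fun t => v + t • (v - p)
  have hdist : ∀ t : ℝ, 0 ≤ t → dist (ray t) p = (1 + t) * dist v p := by
    intro t ht
    rw [dist_eq_norm, dist_eq_norm, show ray t - p = (1 + t) • (v - p) by module, norm_smul,
      Real.norm_of_nonneg (by linarith)]
  -- every point of the ray is farther from `p` than all of `K`
  have hray : ray '' Ici 0 ⊆ connectedComponentIn Kᶜ x := by
    rw [connectedComponentIn_eq hv]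
    refine (isPreconnected_Ici.image _ (by fun_prop)).subset_connectedComponentIn
      ⟨0, self_mem_Ici, by simp [ray]⟩ ?_
    rintro _ ⟨t, ht, rfl⟩ hK
    have := hfar _ hK
    rw [hdist t ht] at this
    nlinarith [mem_Ici.mp ht]
  obtain ⟨r, hr⟩ := (hb.subset hray).subset_closedBall p
  have := hr ⟨|r| / dist v p, mem_Ici.mpr (by positivity), rfl⟩
  rw [mem_closedBall, hdist _ (by positivity), add_mul, div_mul_cancel₀ _ hvp.ne'] at this
  linarith [le_abs_self r]

theorem diam_le_of_subset_union_connectedComponentIn_compl (hK : IsBounded K)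
    (hK' : K.Nonempty) (hb : IsBounded (connectedComponentIn Kᶜ x)) {A : Set E}
    (hA : A ⊆ K ∪ connectedComponentIn Kᶜ x) : diam A ≤ diam K := by
  have hnear : ∀ a ∈ K ∪ connectedComponentIn Kᶜ x, ∀ q ∈ K, dist a q ≤ diam K := by
    rintro a (ha | ha) q hq
    · exact dist_le_diam_of_mem hK ha hq
    · obtain ⟨y, hy, hay⟩ := exists_dist_le_of_mem_connectedComponentIn_compl hK' hb ha q
      exact hay.trans (dist_le_diam_of_mem hK hy hq)
  refine diam_le_of_forall_dist_le diam_nonneg fun a ha b hbA => ?_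
  rcases hA hbA with hbK | hbC
  · exact hnear a (hA ha) b hbK
  · obtain ⟨y, hy, hby⟩ := exists_dist_le_of_mem_connectedComponentIn_compl hK' hb hbC a
    rw [dist_comm]
    exact hby.trans ((dist_comm y a).trans_le (hnear a (hA ha) y hy))

end BoundedComponent

theorem Bornology.IsBounded.image_of_continuous {α β : Type*} [PseudoMetricSpace α]
    [ProperSpace α] [PseudoMetricSpace β] {f : α → β} (hf : Continuous f) {s : Set α}
    (hs : IsBounded s) : IsBounded (f '' s) :=
  (hs.isCompact_closure.image hf).isBounded.subset (image_mono subset_closure)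

open Fin.NatCast in
theorem Fin.natCast_ne_zero_of_pos_of_lt {n m : ℕ} [NeZero n] (h0 : 0 < m) (hm : m < n) :
    (m : Fin n) ≠ 0 := by
  rw [Ne, Fin.natCast_eq_zero]
  exact fun h => (Nat.le_of_dvd h0 h).not_gt hm

namespace Necklace

open Fin.NatCast

variable {d : ℕ} (N : Necklace d)

instance : NeZero N.n := ⟨by have := N.hn; omega⟩

theorem one_eq : N.one = 1 := by
  have := N.hn
  ext
  simp [one, Nat.mod_eq_of_lt (by omega : 1 < N.n)]

theorem add_one_ne_self (k : Fin N.n) : k + N.one ≠ k := by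
  have := N.hn
  rw [Ne, add_eq_left, one_eq, ← Nat.cast_one]
  exact Fin.natCast_ne_zero_of_pos_of_lt one_pos (by omega)

theorem sub_one_ne_add_one (k : Fin N.n) : k - N.one ≠ k + N.one := by
  have := N.hn
  rw [Ne, sub_eq_iff_eq_add, add_assoc, left_eq_add, one_eq, ← Nat.cast_one, ← Nat.cast_add]
  exact Fin.natCast_ne_zero_of_pos_of_lt two_pos (by omega)

theorem image_subset (k : Fin N.n) : N.f k '' N.F ⊆ N.F :=
  (subset_iUnion (fun j => N.f j '' N.F) k).trans N.Fattr.symm.subset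

theorem image_inter_image_add_one (k : Fin N.n) :
    N.f k '' N.F ∩ N.f (k + N.one) '' N.F = {N.z k} :=
  N.hz k

theorem z_mem_image (k : Fin N.n) : N.z k ∈ N.f k '' N.F :=
  ((N.hz k).superset (mem_singleton _)).1

theorem z_mem_image_add_one (k : Fin N.n) : N.z k ∈ N.f (k + N.one) '' N.F :=
  ((N.hz k).superset (mem_singleton _)).2

theorem bdry_subset_image (k : Fin N.n) : N.bdry k ⊆ N.f k '' N.F := by
  refine pair_subset ?_ (N.z_mem_image k)
  simpa using N.z_mem_image_add_one (k - N.one)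

theorem image_inter_image_subset_bdry {j k : Fin N.n} (hjk : j ≠ k) :
    N.f j '' N.F ∩ N.f k '' N.F ⊆ N.bdry k := by
  by_cases hj : j = k + N.one
  · rw [hj, inter_comm, N.image_inter_image_add_one k]
    exact subset_insert _ _
  by_cases hk : k = j + N.one
  · rw [hk, N.image_inter_image_add_one j, bdry, add_sub_cancel_right]
    exact singleton_subset_iff.mpr (mem_insert _ _)
  · rw [N.hdisj j k hjk hj hk]
    exact empty_subset _

def otherCopies (k : Fin N.n) : Set (Euc d) := ⋃ (j) (_ : j ≠ k), N.f j '' N.F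

theorem image_union_otherCopies (k : Fin N.n) : N.f k '' N.F ∪ N.otherCopies k = N.F := by
  refine (union_subset (N.image_subset k) (iUnion₂_subset fun j _ => N.image_subset j)).antisymm
    ?_
  conv_lhs => rw [N.Fattr]
  refine iUnion_subset fun j => ?_
  by_cases hj : j = k
  · exact hj ▸ subset_union_left
  · exact subset_union_of_subset_right (subset_iUnion₂ (s := fun j _ => N.f j '' N.F) j hj) _

theorem isClosed_otherCopies (k : Fin N.n) : IsClosed (N.otherCopies k) :=
  isClosed_iUnion_of_finite fun j =>
    isClosed_iUnion_of_finite fun _ => (N.Fcpt.image (N.f j).continuous).isClosed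

theorem image_inter_otherCopies_subset_bdry (k : Fin N.n) :
    N.f k '' N.F ∩ N.otherCopies k ⊆ N.bdry k := by
  rintro y ⟨hyk, hy⟩
  obtain ⟨j, hjk, hyj⟩ := mem_iUnion₂.mp hy
  exact N.image_inter_image_subset_bdry hjk ⟨hyj, hyk⟩

theorem otherCopies_eq_biUnion (k : Fin N.n) :
    N.otherCopies k = ⋃ m ∈ Ico 1 N.n, N.f (k + (m : Fin N.n)) '' N.F := by
  ext y
  simp only [otherCopies, mem_iUnion, mem_Ico, exists_prop]
  constructor
  · rintro ⟨j, hjk, hy⟩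
    refine ⟨(j - k).val, ⟨Nat.one_le_iff_ne_zero.mpr ?_, (j - k).isLt⟩, ?_⟩
    · exact Fin.val_ne_zero_iff.mpr (sub_ne_zero.mpr hjk)
    · rwa [Fin.cast_val_eq_self, add_sub_cancel]
  · rintro ⟨m, ⟨hm1, hmn⟩, hy⟩
    exact ⟨_, by simpa using Fin.natCast_ne_zero_of_pos_of_lt hm1 hmn, hy⟩

end Necklace

namespace Necklace.NoCutPoints

open Fin.NatCast

variable {d : ℕ} {N : Necklace d}

theorem infinite (hnc : N.NoCutPoints) : N.F.Infinite := by
  intro hfin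
  have himage (k : Fin N.n) : N.f k '' N.F = N.F :=
    hfin.eq_of_subset_of_encard_le' (N.image_subset k) ((N.f k).injective.encard_image _).ge
  -- a finite attractor would equal its copies, so `F = F_0 ∩ F_1` is the single point `z 0`
  have hF : N.F = {N.z 0} := by
    rw [← N.image_inter_image_add_one 0, himage, himage, inter_self]
  obtain ⟨a, ha⟩ := N.Fne
  obtain ⟨b, hb, hba⟩ := (hnc a ha).nonempty
  rw [hF] at ha hb
  exact hba (hb.trans ha.symm)

theorem exists_mem_image_ne (hnc : N.NoCutPoints) (j : Fin N.n) (w : Euc d) :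
    ∃ y ∈ N.f j '' N.F, y ≠ w :=
  ((hnc.infinite.image (N.f j).injective.injOn).sdiff (finite_singleton w)).nonempty

theorem isPreconnected (hnc : N.NoCutPoints) : IsPreconnected N.F := by
  obtain ⟨a, ha⟩ := N.Fne
  obtain ⟨b, hb, hba⟩ := (hnc a ha).nonempty
  obtain ⟨c, hc⟩ := (hnc.infinite.sdiff (toFinite {a, b})).nonempty
  exact IsPreconnected.of_sdiff_singleton (Ne.symm hba) hc (hnc a ha).isPreconnected
    (hnc b hb).isPreconnected

theorem isPreconnected_image_sdiff (hnc : N.NoCutPoints) (j : Fin N.n) {t : Set (Euc d)}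
    (ht : (N.f j '' N.F ∩ t).Subsingleton) : IsPreconnected (N.f j '' N.F \ t) := by
  rw [← image_sdiff_preimage]
  refine (hnc.isPreconnected.sdiff_of_subsingleton_inter (fun x hx => (hnc x hx).isPreconnected)
    ?_).image _ (N.f j).continuous.continuousOn
  exact subsingleton_of_image (N.f j).injective _ (by rwa [image_inter_preimage])

theorem z_sub_one_ne (hnc : N.NoCutPoints) (k : Fin N.n) : N.z (k - N.one) ≠ N.z k := by
  intro hz
  have hbdry : N.bdry k = {N.z k} := by rw [bdry, hz, pair_eq_singleton]
  -- otherwise `F \ {z k}` splits into the disjoint closed pieces `F_k` and `⋃_{j ≠ k} F_j`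
  have hzF : N.z k ∈ N.F := N.image_subset k (N.z_mem_image k)
  obtain ⟨y, ⟨_, hy⟩, hyk, hyo⟩ := isPreconnected_closed_iff.mp (hnc _ hzF).isPreconnected
    _ _ (N.Fcpt.image (N.f k).continuous).isClosed (N.isClosed_otherCopies k)
    (by rw [N.image_union_otherCopies]; exact sdiff_subset)
    (by
      obtain ⟨y, hyk, hy⟩ := hnc.exists_mem_image_ne k (N.z k)
      exact ⟨y, ⟨N.image_subset k hyk, hy⟩, hyk⟩)
    (by
      obtain ⟨y, hyk, hy⟩ := hnc.exists_mem_image_ne (k + N.one) (N.z k)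
      exact ⟨y, ⟨N.image_subset _ hyk, hy⟩,
        mem_iUnion₂.mpr ⟨_, N.add_one_ne_self k, hyk⟩⟩)
  have := N.image_inter_otherCopies_subset_bdry k ⟨hyk, hyo⟩
  rw [hbdry] at this
  exact hy this

theorem z_injective (hnc : N.NoCutPoints) : Function.Injective N.z := by
  intro i j hij
  by_contra hne
  by_cases hj : j = i + N.one
  · exact hnc.z_sub_one_ne j (by rwa [hj, add_sub_cancel_right, ← hj])
  by_cases hi : i = j + N.one
  · exact hnc.z_sub_one_ne i (by rwa [hi, add_sub_cancel_right, ← hi, eq_comm])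
  · exact (N.hdisj i j hne hi hj).subset ⟨N.z_mem_image i, hij ▸ N.z_mem_image j⟩

theorem z_mem_image_iff (hnc : N.NoCutPoints) {i j : Fin N.n} :
    N.z i ∈ N.f j '' N.F ↔ j = i ∨ j = i + N.one := by
  refine ⟨fun hi => ?_, ?_⟩
  · by_contra! hji
    by_cases hij : i = j + N.one
    · have : N.z i ∈ ({N.z j} : Set (Euc d)) := by
        rw [← N.image_inter_image_add_one j, ← hij]
        exact ⟨hi, N.z_mem_image i⟩
      exact hji.1 (hnc.z_injective this).symm
    · exact (N.hdisj j i hji.1 hji.2 hij).subset ⟨hi, N.z_mem_image i⟩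
  · rintro (h | h) <;> rw [h]
    exacts [N.z_mem_image i, N.z_mem_image_add_one i]

theorem subsingleton_image_inter_bdry (hnc : N.NoCutPoints) {j k : Fin N.n} (hjk : j ≠ k) :
    (N.f j '' N.F ∩ N.bdry k).Subsingleton := by
  have hpred : N.z (k - N.one) ∈ N.f j '' N.F → j = k - N.one := by
    rw [hnc.z_mem_image_iff, sub_add_cancel]
    exact fun h => h.resolve_right hjk
  have hsucc : N.z k ∈ N.f j '' N.F → j = k + N.one := by
    rw [hnc.z_mem_image_iff]
    exact fun h => h.resolve_left hjk
  rintro a ⟨ha, rfl | rfl⟩ b ⟨hb, rfl | rfl⟩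
  · rfl
  · exact absurd ((hpred ha).symm.trans (hsucc hb)) (N.sub_one_ne_add_one k)
  · exact absurd ((hpred hb).symm.trans (hsucc ha)) (N.sub_one_ne_add_one k)
  · rfl

theorem isPreconnected_otherCopies_sdiff_bdry (hnc : N.NoCutPoints) (k : Fin N.n) :
    IsPreconnected (N.otherCopies k \ N.bdry k) := by
  simp only [N.otherCopies_eq_biUnion, iUnion_sdiff]
  refine IsPreconnected.biUnion_of_chain ordConnected_Ico
    (fun m hm => hnc.isPreconnected_image_sdiff _ (hnc.subsingleton_image_inter_bdry
      (by simpa using Fin.natCast_ne_zero_of_pos_of_lt hm.1 hm.2)))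
    fun m hm hm' => ?_
  rw [Order.succ_eq_add_one, mem_Ico] at hm'
  -- consecutive copies `F_{k+m}` and `F_{k+m+1}` share the node `z (k+m)`, which is not in `∂F_k`
  have hnot : N.z (k + m) ∉ N.bdry k := by
    rintro (h | h) <;> have := hnc.z_injective h
    · refine Fin.natCast_ne_zero_of_pos_of_lt (Nat.succ_pos m) hm'.2 ?_
      rwa [Nat.cast_add_one, ← one_eq, ← add_eq_left (a := k), ← add_assoc,
        ← eq_sub_iff_add_eq]
    · exact Fin.natCast_ne_zero_of_pos_of_lt hm.1 hm.2 (add_eq_left.mp this)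
  refine ⟨N.z (k + m), ⟨N.z_mem_image _, hnot⟩, ?_, hnot⟩
  rw [Order.succ_eq_add_one, Nat.cast_add_one, ← add_assoc, ← one_eq]
  exact N.z_mem_image_add_one _

theorem diam_image_lt (hnc : N.NoCutPoints) (k : Fin N.n) : diam (N.f k '' N.F) < diam N.F := by
  obtain ⟨c, hc, hf⟩ := N.contr k
  calc diam (N.f k '' N.F) ≤ c * diam N.F := hf.diam_image_le _ N.Fcpt.isBounded
    _ < diam N.F := mul_lt_of_lt_one_left (diam_pos hnc.infinite.nontrivial N.Fcpt.isBounded) hc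

theorem disjoint_image_connectedComponentIn (hnc : N.NoCutPoints) (k : Fin N.n) {x : Euc d}
    (hx : x ∉ N.F) (hb : IsBounded (connectedComponentIn N.Fᶜ x)) :
    Disjoint (N.f k '' connectedComponentIn N.Fᶜ x) N.F := by
  set K := N.f k '' N.F
  have hKcl : IsClosed K := (N.Fcpt.image (N.f k).continuous).isClosed
  have hV : N.f k '' connectedComponentIn N.Fᶜ x = connectedComponentIn Kᶜ (N.f k x) := by
    rw [Homeomorph.image_connectedComponentIn _ hx, image_compl_eq (N.f k).bijective]
  have hVb : IsBounded (connectedComponentIn Kᶜ (N.f k x)) :=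
    hV ▸ hb.image_of_continuous (N.f k).continuous
  rw [hV]
  set V := connectedComponentIn Kᶜ (N.f k x)
  rw [Set.disjoint_left]
  intro e heV heF
  have heK : e ∉ K := connectedComponentIn_subset _ _ heV
  have hsub : N.otherCopies k \ N.bdry k ⊆ V := by
    refine (hnc.isPreconnected_otherCopies_sdiff_bdry k).subset_of_closure_inter_subset
      hKcl.isOpen_compl.connectedComponentIn ?_ ?_
    · have heo : e ∈ N.otherCopies k :=
        ((N.image_union_otherCopies k).superset heF).resolve_left heK
      exact ⟨e, ⟨heo, fun h => heK (N.bdry_subset_image k h)⟩, heV⟩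
    · rintro y ⟨hyV, hyo, hyB⟩
      refine (closure_connectedComponentIn_subset hKcl.isOpen_compl _ hyV).resolve_right ?_
      exact fun hyK => hyB (N.image_inter_otherCopies_subset_bdry k ⟨not_not.mp hyK, hyo⟩)
  have hFsub : N.F ⊆ K ∪ V := by
    intro y hy
    rw [← N.image_union_otherCopies k] at hy
    rcases hy with hy | hy
    · exact Or.inl hy
    by_cases hyB : y ∈ N.bdry k
    · exact Or.inl (N.bdry_subset_image k hyB)
    · exact Or.inr (hsub ⟨hy, hyB⟩)
  exact (diam_le_of_subset_union_connectedComponentIn_compl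
    (N.Fcpt.image (N.f k).continuous).isBounded (N.Fne.image _) hVb hFsub).not_gt
    (hnc.diam_image_lt k)

theorem image_connectedComponentIn (hnc : N.NoCutPoints) (k : Fin N.n) {x : Euc d}
    (hx : x ∉ N.F) (hb : IsBounded (connectedComponentIn N.Fᶜ x)) :
    N.f k '' connectedComponentIn N.Fᶜ x = connectedComponentIn N.Fᶜ (N.f k x) := by
  have hdisj := hnc.disjoint_image_connectedComponentIn k hx hb
  rw [Homeomorph.image_connectedComponentIn _ hx, image_compl_eq (N.f k).bijective] at hdisj ⊢
  have hfx : N.f k x ∈ (N.f k '' N.F)ᶜ := fun h => hx ((N.f k).injective.mem_set_image.mp h)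
  exact (connectedComponentIn_eq_of_subset (compl_subset_compl.mpr (N.image_subset k))
    (hdisj.subset_compl_right (mem_connectedComponentIn hfx)) hdisj.subset_compl_right).symm

theorem image_word_connectedComponentIn (hnc : N.NoCutPoints) (σ : List (Fin N.n))
    {x : Euc d} (hx : x ∉ N.F) (hb : IsBounded (connectedComponentIn N.Fᶜ x)) :
    N.word σ '' connectedComponentIn N.Fᶜ x = connectedComponentIn N.Fᶜ (N.word σ x) := by
  induction σ with
  | nil => simp [word]
  | cons i s ih =>
    have hbs : IsBounded (connectedComponentIn N.Fᶜ (N.word s x)) :=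
      ih ▸ hb.image_of_continuous (N.word s).continuous
    have hxs : N.word s x ∉ N.F :=
      connectedComponentIn_subset _ _ (ih ▸ mem_image_of_mem _ (mem_connectedComponentIn hx))
    calc N.word (i :: s) '' connectedComponentIn N.Fᶜ x
        = N.f i '' (N.word s '' connectedComponentIn N.Fᶜ x) :=
          (image_image (N.f i) (N.word s) _).symm
      _ = connectedComponentIn N.Fᶜ (N.word (i :: s) x) := by
        rw [ih, hnc.image_connectedComponentIn i hxs hbs]
        rfl

end Necklace.NoCutPoints

/-- Let `F` be a planar necklace with no cut points and `U` a bounded connected component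
of `ℝ² \ F`.  Then for every finite word `σ`, `f_σ(U)` is a bounded connected component
of `ℝ² \ F`; in particular `f_σ(U) ∩ F = ∅`. -/
theorem Necklace.image_of_bounded_component {N : Necklace 2} (hnc : N.NoCutPoints)
    (U : Set (Euc 2)) (hUbdd : IsBounded U)
    (hUcomp : ∃ x ∈ N.Fᶜ, U = connectedComponentIn N.Fᶜ x)
    (σ : List (Fin N.n)) :
    (∃ x ∈ N.Fᶜ, N.word σ '' U = connectedComponentIn N.Fᶜ x) ∧
      IsBounded (N.word σ '' U) ∧ N.word σ '' U ∩ N.F = ∅ := by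
  obtain ⟨x, hx, rfl⟩ := hUcomp
  have himage := hnc.image_word_connectedComponentIn σ hx hUbdd
  have hsub : N.word σ '' connectedComponentIn N.Fᶜ x ⊆ N.Fᶜ :=
    himage ▸ connectedComponentIn_subset _ _
  refine ⟨⟨N.word σ x, hsub (mem_image_of_mem _ (mem_connectedComponentIn hx)), himage⟩,
    hUbdd.image_of_continuous (N.word σ).continuous, ?_⟩
  exact disjoint_iff_inter_eq_empty.mp (disjoint_compl_left.mono_left hsub)
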